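/- arXiv:1612.08340 — 6 statements merged into one kernel-verified Lean document; each statement's English description precedes it below -/
import Mathlib

section
/- Let T be a triangulated category, N a triangulated subcategory of T, and (U, X, V) an N-localization triple of T. If U ∩ V is a Frobenius special X-monic closed subcategory of T, then (U, X, V) satisfies the Verdier condition: for every distinguished triangle A →(s) B → N → A[1] with A, B ∈ U ∩ V and N ∈ N, there exists a morphism t: B → A such that 1_A − t∘s and 1_B − s∘t both factor through X. -/
/-!
Let `A →i X₀ →p U₀ → A⟦1⟧` be an `X`-preenvelope triangle of `A` with `p` an `X`-precover, and
`A →(i, s) X₀ ⊞ B →g' M →h' A⟦1⟧` the triangle given by special `X`-monic closedness, so that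
`M ∈ U ∩ V`. A morphism between objects of `U ∩ V` that factors through an object of `N` factors
through `X`. Comparing `M` with a cone `D ∈ N` of `h ≫ i⟦1⟧` produces an endomorphism of `M`
through `D` fixing `g'`; it factors through `X`, so the precover makes it vanish against `h'`, and
this splits `(i, s)` up to a map `r` with `(𝟙 - (i, s) ≫ r) ≫ (i, s) = 0`. Then `t = inr ≫ r` works:
`𝟙 - s ≫ t` is `i ≫ (inl ≫ r)` plus a map through `N₀⟦-1⟧`, and `𝟙 - t ≫ s` factors through `g'`,
hence through `D`.
-/

open CategoryTheory Category Limits Pretriangulated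

universe v u

variable {T : Type u} [Category.{v} T] [HasZeroObject T] [HasShift T ℤ]
  [Preadditive T] [∀ n : ℤ, (CategoryTheory.shiftFunctor T n).Additive] [Pretriangulated T]

namespace VerdierPaper

/-- A morphism factors through the subcategory `X`. -/
def FactorsThru (X : Set T) {A B : T} (f : A ⟶ B) : Prop :=
  ∃ (X₀ : T) (_ : X₀ ∈ X) (g : A ⟶ X₀) (h : X₀ ⟶ B), f = g ≫ h

/-- A triangulated subcategory: closed under isomorphisms, shifts in both directions,
contains a zero object, and two-out-of-three for distinguished triangles. -/
structure IsTriangulatedSub (N : Set T) : Prop where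
  zero : ∃ Z ∈ N, IsZero Z
  closedIso : ∀ {A B : T}, (A ≅ B) → A ∈ N → B ∈ N
  shift : ∀ A ∈ N, (A⟦(1 : ℤ)⟧) ∈ N
  unshift : ∀ A ∈ N, (A⟦(-1 : ℤ)⟧) ∈ N
  two_of_three₁₂ : ∀ Tr ∈ (distTriang T), Tr.obj₁ ∈ N → Tr.obj₂ ∈ N → Tr.obj₃ ∈ N
  two_of_three₂₃ : ∀ Tr ∈ (distTriang T), Tr.obj₂ ∈ N → Tr.obj₃ ∈ N → Tr.obj₁ ∈ N
  two_of_three₁₃ : ∀ Tr ∈ (distTriang T), Tr.obj₁ ∈ N → Tr.obj₃ ∈ N → Tr.obj₂ ∈ N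

/-- Closed under direct summands (retracts). -/
def ClosedUnderSummands (S : Set T) : Prop :=
  ∀ (X₀ A : T), X₀ ∈ S → ∀ (i : A ⟶ X₀) (r : X₀ ⟶ A), i ≫ r = 𝟙 A → A ∈ S

/-- `f : A ⟶ B` is `X`-monic: every morphism from `A` to an object of `X` extends along `f`. -/
def XMonic (X : Set T) {A B : T} (f : A ⟶ B) : Prop :=
  ∀ X₀ ∈ X, ∀ g : A ⟶ X₀, ∃ h : B ⟶ X₀, f ≫ h = g

/-- `f : A ⟶ B` is `X`-epic: every morphism from an object of `X` to `B` lifts along `f`. -/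
def XEpic (X : Set T) {A B : T} (f : A ⟶ B) : Prop :=
  ∀ X₀ ∈ X, ∀ g : X₀ ⟶ B, ∃ h : X₀ ⟶ A, h ≫ f = g

/-- An `X`-preenvelope: an `X`-monic with target in `X`. -/
def Preenvelope (X : Set T) {A X₀ : T} (f : A ⟶ X₀) : Prop :=
  X₀ ∈ X ∧ XMonic X f

/-- An `X`-precover: an `X`-epic with source in `X`. -/
def Precover (X : Set T) {X₀ B : T} (f : X₀ ⟶ B) : Prop :=
  X₀ ∈ X ∧ XEpic X f

/-- `U^{⊥,X}`: objects such that every morphism from an object of `U` factors through `X`. -/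
def perpRightX (U X : Set T) : Set T :=
  {W | ∀ U₀ ∈ U, ∀ f : U₀ ⟶ W, FactorsThru X f}

/-- `^{X,⊥}V`: objects such that every morphism to an object of `V` factors through `X`. -/
def perpLeftX (X V : Set T) : Set T :=
  {W | ∀ V₀ ∈ V, ∀ f : W ⟶ V₀, FactorsThru X f}

/-- A localization triple `(U, X, V)` of `T`. Triangles `A[-1] → W → Q → A` are
recorded in the rotated form `W → Q → A → W[1]`. -/
structure IsLocalizationTriple (U X V : Set T) : Prop where
  subU : X ⊆ U
  subV : X ⊆ V
  precover : ∀ A : T, ∃ (W Q : T) (w : W ⟶ Q) (r : Q ⟶ A) (d : A ⟶ W⟦(1 : ℤ)⟧),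
    Triangle.mk w r d ∈ (distTriang T) ∧ Precover U r ∧ W ∈ perpRightX U X
  preenvelope : ∀ A : T, ∃ (R W : T) (j : A ⟶ R) (t : R ⟶ W) (d : W ⟶ A⟦(1 : ℤ)⟧),
    Triangle.mk j t d ∈ (distTriang T) ∧ Preenvelope V j ∧ W ∈ perpLeftX X V
  precoverV : ∀ A ∈ V, ∃ (W Q : T) (w : W ⟶ Q) (r : Q ⟶ A) (d : A ⟶ W⟦(1 : ℤ)⟧),
    Triangle.mk w r d ∈ (distTriang T) ∧ Precover U r ∧ W ∈ perpRightX U X ∧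
    Q ∈ U ∩ V ∧ W ∈ V ∧ W ∈ perpRightX (U ∩ V) X
  preenvelopeU : ∀ A ∈ U, ∃ (R W : T) (j : A ⟶ R) (t : R ⟶ W) (d : W ⟶ A⟦(1 : ℤ)⟧),
    Triangle.mk j t d ∈ (distTriang T) ∧ Preenvelope V j ∧ W ∈ perpLeftX X V ∧
    R ∈ U ∩ V ∧ W ∈ U ∧ W ∈ perpLeftX X (U ∩ V)

/-- An `N`-localization triple. -/
structure IsNLocalizationTriple (N U X V : Set T) extends IsLocalizationTriple U X V : Prop where
  xEq : X = U ∩ V ∩ N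
  perpR_subset : perpRightX U X ⊆ N
  perpL_subset : perpLeftX X V ⊆ N

/-- The Verdier condition for an `N`-localization triple. -/
def VerdierCondition (N U X V : Set T) : Prop :=
  ∀ (A B N₀ : T) (s : A ⟶ B) (g : B ⟶ N₀) (h : N₀ ⟶ A⟦(1 : ℤ)⟧),
    Triangle.mk s g h ∈ (distTriang T) → A ∈ U ∩ V → B ∈ U ∩ V → N₀ ∈ N →
    ∃ t : B ⟶ A, FactorsThru X (𝟙 A - s ≫ t) ∧ FactorsThru X (𝟙 B - t ≫ s)


/-- `Cc` is special `X`-monic closed in `T`. -/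
structure SpecialXMonicClosed (X Cc : Set T) : Prop where
  subset : X ⊆ Cc
  envelope : ∀ A ∈ Cc, ∃ (X₀ U₀ : T) (i : A ⟶ X₀) (p : X₀ ⟶ U₀) (q : U₀ ⟶ A⟦(1 : ℤ)⟧),
    Triangle.mk i p q ∈ (distTriang T) ∧ X₀ ∈ X ∧ U₀ ∈ Cc ∧ Preenvelope X i
  pushout : ∀ (A X₀ U₀ B : T) (i : A ⟶ X₀) (p : X₀ ⟶ U₀) (q : U₀ ⟶ A⟦(1 : ℤ)⟧),
    Triangle.mk i p q ∈ (distTriang T) → X₀ ∈ X → U₀ ∈ Cc → Preenvelope X i →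
    A ∈ Cc → B ∈ Cc → ∀ f : A ⟶ B,
    ∃ (N₀ : T) (g : X₀ ⊞ B ⟶ N₀) (h : N₀ ⟶ A⟦(1 : ℤ)⟧),
      Triangle.mk (biprod.lift i f) g h ∈ (distTriang T) ∧ N₀ ∈ Cc

/-- `Cc` is Frobenius special `X`-monic closed in `T`. -/
structure FrobSpecialXMonicClosed (X Cc : Set T) extends SpecialXMonicClosed X Cc : Prop where
  copresent : ∀ A ∈ Cc, ∃ (K X' : T) (u : K ⟶ X') (v : X' ⟶ A) (d : A ⟶ K⟦(1 : ℤ)⟧),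
    Triangle.mk u v d ∈ (distTriang T) ∧ X' ∈ X ∧ K ∈ Cc ∧ Preenvelope X u
  biEnvelope : ∀ A ∈ Cc, ∃ (X₀ U₀ : T) (i : A ⟶ X₀) (p : X₀ ⟶ U₀) (q : U₀ ⟶ A⟦(1 : ℤ)⟧),
    Triangle.mk i p q ∈ (distTriang T) ∧ X₀ ∈ X ∧ U₀ ∈ Cc ∧ Preenvelope X i ∧ Precover X p

lemma IsTriangulatedSub.biprod_mem {N : Set T} (hN : IsTriangulatedSub N) {P Q : T}
    (hP : P ∈ N) (hQ : Q ∈ N) : (P ⊞ Q) ∈ N :=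
  hN.two_of_three₁₃ _ (binaryBiproductTriangle_distinguished P Q) hP hQ

/-- Pass through a `V`-preenvelope `D ⟶ R` and then a `U`-precover `Q ⟶ R`; the two-out-of-three
property puts `R`, then `Q`, in `N`, so `Q ∈ U ∩ V ∩ N = X`. -/
lemma IsNLocalizationTriple.factorsThru_comp {N U X V : Set T} (hN : IsTriangulatedSub N)
    (hLoc : IsNLocalizationTriple N U X V) {C₁ C₂ D : T} (hC₁ : C₁ ∈ U) (hC₂ : C₂ ∈ V)
    (hD : D ∈ N) (φ : C₁ ⟶ D) (ψ : D ⟶ C₂) : FactorsThru X (φ ≫ ψ) := by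
  obtain ⟨R, W, j, _, _, hTj, ⟨hR, hj⟩, hW⟩ := hLoc.preenvelope D
  have hRN : R ∈ N := hN.two_of_three₁₃ _ hTj hD (hLoc.perpL_subset hW)
  obtain ⟨W', Q, _, r, _, hTr, ⟨-, hr⟩, hW', hQ, -, -⟩ := hLoc.precoverV R hR
  have hQX : Q ∈ X := by
    rw [hLoc.xEq]
    exact ⟨hQ, hN.two_of_three₁₃ _ hTr (hLoc.perpR_subset hW') hRN⟩
  obtain ⟨ψ', hψ'⟩ := hj C₂ hC₂ ψ
  obtain ⟨φ', hφ'⟩ := hr C₁ hC₁ (φ ≫ j)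
  exact ⟨Q, hQX, φ', r ≫ ψ', by rw [← hψ', ← reassoc_of% hφ']⟩

/-- A morphism `Q ⟶ A⟦1⟧` killed by `i⟦1⟧` factors through `q`, and when `Q ∈ X` the factor
lifts along the `X`-epic `p`, with `p ≫ q = 0`. -/
lemma FactorsThru.comp_eq_zero {X : Set T} {A X₀ U₀ Y Z : T} {i : A ⟶ X₀} {p : X₀ ⟶ U₀}
    {q : U₀ ⟶ A⟦(1 : ℤ)⟧} (hT : Triangle.mk i p q ∈ distTriang T) (hp : XEpic X p)
    {φ : Z ⟶ Y} (hφ : FactorsThru X φ) {y : Y ⟶ A⟦(1 : ℤ)⟧} (hy : y ≫ i⟦(1 : ℤ)⟧' = 0) :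
    φ ≫ y = 0 := by
  obtain ⟨Q, hQ, c, d, rfl⟩ := hφ
  obtain ⟨e, he⟩ : ∃ e : Q ⟶ U₀, d ≫ y = e ≫ q :=
    Triangle.coyoneda_exact₁ _ hT (d ≫ y)
      (show (d ≫ y) ≫ i⟦(1 : ℤ)⟧' = 0 by rw [assoc, hy, comp_zero])
  obtain ⟨k, rfl⟩ := hp Q hQ e
  have hpq : p ≫ q = 0 := comp_distTriang_mor_zero₂₃ _ hT
  rw [assoc, he, assoc, hpq, comp_zero, comp_zero]

/-- With `𝟙 M - φ = h ≫ σ` we get `h ≫ σ ≫ h = h`, so `𝟙 - σ ≫ h` is killed by `h` and is therefore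
`(𝟙 - f ≫ r)⟦1⟧'` for some `r`; composing with `f⟦1⟧'` gives zero. -/
lemma exists_id_sub_comp_comp_eq_zero {A E M : T} {f : A ⟶ E} {g : E ⟶ M}
    {h : M ⟶ A⟦(1 : ℤ)⟧} (hT : Triangle.mk f g h ∈ distTriang T) (φ : M ⟶ M) (hgφ : g ≫ φ = g)
    (hφh : φ ≫ h = 0) : ∃ r : E ⟶ A, (𝟙 A - f ≫ r) ≫ f = 0 := by
  obtain ⟨σ, hσ⟩ : ∃ σ : A⟦(1 : ℤ)⟧ ⟶ M, 𝟙 M - φ = h ≫ σ :=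
    Triangle.yoneda_exact₃ _ hT (𝟙 M - φ)
      (show g ≫ (𝟙 M - φ) = 0 by rw [Preadditive.comp_sub, hgφ, comp_id, sub_self])
  have hhσh : h ≫ σ ≫ h = h := by
    rw [← assoc, ← hσ, Preadditive.sub_comp, hφh, id_comp, sub_zero]
  obtain ⟨ψ, hψ⟩ : ∃ ψ : E⟦(1 : ℤ)⟧ ⟶ A⟦(1 : ℤ)⟧, 𝟙 _ - σ ≫ h = (-f⟦(1 : ℤ)⟧') ≫ ψ :=
    Triangle.yoneda_exact₃ _ (rot_of_distTriang _ hT) (𝟙 _ - σ ≫ h)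
      (show h ≫ (𝟙 _ - σ ≫ h) = 0 by rw [Preadditive.comp_sub, comp_id, hhσh, sub_self])
  replace hψ : 𝟙 _ + f⟦(1 : ℤ)⟧' ≫ ψ = σ ≫ h := by
    rw [← sub_neg_eq_add, ← Preadditive.neg_comp, ← hψ, sub_sub_cancel]
  have hhf : h ≫ f⟦(1 : ℤ)⟧' = 0 := comp_distTriang_mor_zero₃₁ _ hT
  refine ⟨(shiftFunctor T (1 : ℤ)).preimage (-ψ), (shiftFunctor T (1 : ℤ)).map_injective ?_⟩
  rw [Functor.map_zero, Functor.map_comp, Functor.map_sub, CategoryTheory.Functor.map_id,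
    Functor.map_comp, Functor.map_preimage, Preadditive.comp_neg, sub_neg_eq_add, hψ, assoc, hhf,
    comp_zero]

/-- `D` would be the homotopy pushout `M` of `i` and `s` if the octahedral axiom were available;
without it we only compare the two, through `α = biprod.desc (-a) δ` where `(i, δ, 𝟙)` is a morphism
of triangles: `α = g' ≫ χ` and `α ≫ ρ = g'`. -/
lemma exists_comp_comp_eq_of_cone {A B N₀ X₀ D M : T} {s : A ⟶ B} {g : B ⟶ N₀}
    {h : N₀ ⟶ A⟦(1 : ℤ)⟧} {i : A ⟶ X₀} {a : X₀ ⟶ D} {b : D ⟶ N₀} {g' : X₀ ⊞ B ⟶ M}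
    {h' : M ⟶ A⟦(1 : ℤ)⟧} (hT : Triangle.mk s g h ∈ distTriang T)
    (hTf : Triangle.mk (biprod.lift i s) g' h' ∈ distTriang T)
    (hTD : Triangle.mk a b (h ≫ i⟦(1 : ℤ)⟧') ∈ distTriang T) :
    ∃ (χ : M ⟶ D) (ρ : D ⟶ M), g' ≫ χ ≫ ρ = g' := by
  have hhs : h ≫ s⟦(1 : ℤ)⟧' = 0 := comp_distTriang_mor_zero₃₁ _ hT
  have hfg' : biprod.lift i s ≫ g' = 0 := comp_distTriang_mor_zero₁₂ _ hTf
  have hab : a ≫ b = 0 := comp_distTriang_mor_zero₁₂ _ hTD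
  have hhf : h ≫ (biprod.lift i s)⟦(1 : ℤ)⟧' = (h ≫ i⟦(1 : ℤ)⟧') ≫ biprod.inl⟦(1 : ℤ)⟧' := by
    rw [biprod.lift_eq, Functor.map_add, Functor.map_comp, Functor.map_comp,
      Preadditive.comp_add, ← assoc h (s⟦(1 : ℤ)⟧'), hhs, zero_comp, add_zero, assoc]
  have hsum : i ≫ biprod.inl ≫ g' + s ≫ biprod.inr ≫ g' = 0 := by
    rw [← hfg', biprod.lift_eq, Preadditive.add_comp, assoc, assoc]
  obtain ⟨δ, hsδ, hδb⟩ : ∃ δ : B ⟶ D, s ≫ δ = i ≫ a ∧ g ≫ 𝟙 N₀ = δ ≫ b :=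
    complete_distinguished_triangle_morphism₂ _ _ hT hTD i (𝟙 N₀) (id_comp _).symm
  rw [comp_id] at hδb
  obtain ⟨ρ₀, haρ₀, -⟩ : ∃ ρ₀ : D ⟶ M, a ≫ ρ₀ = (-biprod.inl) ≫ g' ∧ b ≫ h = ρ₀ ≫ h' :=
    complete_distinguished_triangle_morphism₂ _ _ hTD (rot_of_distTriang _ hTf) (-biprod.inl) h
      (show (h ≫ i⟦(1 : ℤ)⟧') ≫ (-biprod.inl)⟦(1 : ℤ)⟧' = h ≫ (-(biprod.lift i s)⟦(1 : ℤ)⟧') by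
        rw [Functor.map_neg, Preadditive.comp_neg, Preadditive.comp_neg, hhf])
  obtain ⟨ε, hε⟩ : ∃ ε : N₀ ⟶ M, δ ≫ ρ₀ - biprod.inr ≫ g' = g ≫ ε :=
    Triangle.yoneda_exact₂ _ hT (δ ≫ ρ₀ - biprod.inr ≫ g')
      (show s ≫ (δ ≫ ρ₀ - biprod.inr ≫ g') = 0 by
        rw [Preadditive.comp_sub, reassoc_of% hsδ, haρ₀, Preadditive.neg_comp,
          Preadditive.comp_neg, ← neg_add', hsum, neg_zero])
  obtain ⟨χ, hχ⟩ : ∃ χ : M ⟶ D, biprod.desc (-a) δ = g' ≫ χ :=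
    Triangle.yoneda_exact₂ _ hTf (biprod.desc (-a) δ)
      (show biprod.lift i s ≫ biprod.desc (-a) δ = 0 by
        rw [biprod.lift_desc, Preadditive.comp_neg, hsδ, neg_add_cancel])
  refine ⟨χ, ρ₀ - b ≫ ε, ?_⟩
  rw [← assoc, ← hχ]
  apply biprod.hom_ext'
  · simp [Preadditive.comp_sub, haρ₀, reassoc_of% hab]
  · rw [biprod.inr_desc_assoc, Preadditive.comp_sub, ← reassoc_of% hδb, ← hε, sub_sub_cancel]

lemma IsNLocalizationTriple.factorsThru_id_sub_comp_inr {N U X V : Set T}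
    (hN : IsTriangulatedSub N) (hLoc : IsNLocalizationTriple N U X V) {A B N₀ X₀ : T}
    {s : A ⟶ B} {g : B ⟶ N₀} {h : N₀ ⟶ A⟦(1 : ℤ)⟧} (hT : Triangle.mk s g h ∈ distTriang T)
    (hA : A ∈ U ∩ V) (hN₀ : N₀ ∈ N) (hX₀ : X₀ ∈ N) (i : A ⟶ X₀) (r : X₀ ⊞ B ⟶ A)
    (hr : (𝟙 A - biprod.lift i s ≫ r) ≫ s = 0) :
    FactorsThru X (𝟙 A - s ≫ biprod.inr ≫ r) := by
  set d : N₀⟦(-1 : ℤ)⟧ ⟶ A := (Triangle.mk s g h).invRotate.mor₁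
  obtain ⟨c, hc⟩ : ∃ c : A ⟶ N₀⟦(-1 : ℤ)⟧, 𝟙 A - biprod.lift i s ≫ r = c ≫ d :=
    Triangle.coyoneda_exact₂ _ (inv_rot_of_distTriang _ hT) _ hr
  have hsplit : 𝟙 A - s ≫ biprod.inr ≫ r = biprod.lift i c ≫ biprod.desc (biprod.inl ≫ r) d := by
    rw [biprod.lift_desc, ← hc, biprod.lift_eq, Preadditive.add_comp, assoc, assoc]
    abel
  rw [hsplit]
  exact hLoc.factorsThru_comp hN hA.1 hA.2 (hN.biprod_mem hX₀ (hN.unshift _ hN₀)) _ _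

lemma IsNLocalizationTriple.factorsThru_id_sub_inr_comp {N U X V : Set T}
    (hN : IsTriangulatedSub N) (hLoc : IsNLocalizationTriple N U X V) {A B X₀ M D : T}
    {s : A ⟶ B} {i : A ⟶ X₀} {g' : X₀ ⊞ B ⟶ M} {h' : M ⟶ A⟦(1 : ℤ)⟧}
    (hTf : Triangle.mk (biprod.lift i s) g' h' ∈ distTriang T) (hB : B ∈ U ∩ V) (hD : D ∈ N)
    {χ : M ⟶ D} {ρ : D ⟶ M} (hχρ : g' ≫ χ ≫ ρ = g') (r : X₀ ⊞ B ⟶ A)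
    (hr : (𝟙 A - biprod.lift i s ≫ r) ≫ s = 0) :
    FactorsThru X (𝟙 B - (biprod.inr ≫ r) ≫ s) := by
  obtain ⟨ψ, hψ⟩ : ∃ ψ : M ⟶ B,
      biprod.desc (-(biprod.inl ≫ r ≫ s)) (𝟙 B - biprod.inr ≫ r ≫ s) = g' ≫ ψ :=
    Triangle.yoneda_exact₂ _ hTf _ (show biprod.lift i s ≫ biprod.desc _ _ = 0 by
      refine Eq.trans ?_ hr
      rw [biprod.lift_desc, biprod.lift_eq]
      simp only [Preadditive.comp_neg, Preadditive.comp_sub, Preadditive.sub_comp,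
        Preadditive.add_comp, comp_id, id_comp, assoc]
      abel)
  have hsplit : 𝟙 B - (biprod.inr ≫ r) ≫ s = (biprod.inr ≫ g' ≫ χ) ≫ ρ ≫ ψ := by
    simp only [assoc]
    rw [reassoc_of% hχρ, ← hψ, biprod.inr_desc]
  rw [hsplit]
  exact hLoc.factorsThru_comp hN hB.1 hB.2 hD _ _

theorem statement_0 (N U X V : Set T) (hN : IsTriangulatedSub N)
    (hLoc : IsNLocalizationTriple N U X V)
    (hFrob : FrobSpecialXMonicClosed X (U ∩ V)) :
    VerdierCondition N U X V := by
  intro A B N₀ s g h hT hA hB hN₀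
  obtain ⟨X₀, U₀, i, p, q, hTi, hX₀, hU₀, hi, -, hp⟩ := hFrob.biEnvelope A hA
  obtain ⟨M, g', h', hTf, hM⟩ := hFrob.pushout A X₀ U₀ B i p q hTi hX₀ hU₀ hi hA hB s
  obtain ⟨D, a, b, hTD⟩ := distinguished_cocone_triangle₂ (h ≫ i⟦(1 : ℤ)⟧')
  have hX₀N : X₀ ∈ N := (hLoc.xEq ▸ hX₀).2
  have hD : D ∈ N := hN.two_of_three₁₃ _ hTD hX₀N hN₀
  obtain ⟨χ, ρ, hχρ⟩ := exists_comp_comp_eq_of_cone hT hTf hTD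
  have hh'i : h' ≫ i⟦(1 : ℤ)⟧' = 0 := by
    have hh'f : h' ≫ (biprod.lift i s)⟦(1 : ℤ)⟧' = 0 := comp_distTriang_mor_zero₃₁ _ hTf
    rw [← biprod.lift_fst i s, Functor.map_comp, ← assoc, hh'f, zero_comp]
  have hχρh' : (χ ≫ ρ) ≫ h' = 0 :=
    (hLoc.factorsThru_comp hN hM.1 hM.2 hD χ ρ).comp_eq_zero hTi hp hh'i
  obtain ⟨r, hr⟩ := exists_id_sub_comp_comp_eq_zero hTf (χ ≫ ρ) hχρ hχρh'
  have hrs : (𝟙 A - biprod.lift i s ≫ r) ≫ s = 0 := by simpa using hr =≫ biprod.snd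
  exact ⟨biprod.inr ≫ r, hLoc.factorsThru_id_sub_comp_inr hN hT hA hN₀ hX₀N i r hrs,
    hLoc.factorsThru_id_sub_inr_comp hN hTf hB hD hχρ r hrs⟩

end VerdierPaper
end

section
/- Let T be a triangulated category and U a subcategory such that (U, U^⊥) is a torsion pair in T. If G is an object of T with G[1] ∈ U^⊥, then every morphism f: C → G with C ∈ U factors through an object Q with Q ∈ U and Q[1] ∈ U^⊥ (that is, f factors through the subcategory U ∩ U^⊥[-1]). -/
open CategoryTheory Category Limits Pretriangulated

universe v u

variable {T : Type u} [Category.{v} T] [HasZeroObject T] [HasShift T ℤ]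
  [Preadditive T] [∀ n : ℤ, (CategoryTheory.shiftFunctor T n).Additive] [Pretriangulated T]

namespace VerdierPaper

/-- A torsion pair `(Cc, Dd)` in `T`. -/
def TorsionPair (Cc Dd : Set T) : Prop :=
  (∀ C₀ ∈ Cc, ∀ D₀ ∈ Dd, ∀ f : C₀ ⟶ D₀, f = 0) ∧
  ∀ A : T, ∃ (C₀ D₀ : T) (f : C₀ ⟶ A) (g : A ⟶ D₀) (h : D₀ ⟶ C₀⟦(1 : ℤ)⟧),
    Triangle.mk f g h ∈ (distTriang T) ∧ C₀ ∈ Cc ∧ D₀ ∈ Dd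

/-- `U^⊥`. -/
def rightPerp (U : Set T) : Set T := {A | ∀ U₀ ∈ U, ∀ f : U₀ ⟶ A, f = 0}

/-- `^⊥V`. -/
def leftPerp (V : Set T) : Set T := {A | ∀ V₀ ∈ V, ∀ f : A ⟶ V₀, f = 0}

/-!
Take the torsion triangle `C → G → D → C[1]` of `G`. Since `D ∈ U^⊥`, every map from an object
of `U` to `G` lifts to `C`; and the twice-rotated triangle `D → C[1] → G[1] → D[1]` exhibits
`C[1]` as an extension of two objects of `U^⊥`, which is closed under extensions.
-/

section RightPerp

variable {U : Set T}

lemma xEpic_mor₁_of_obj₃_mem_rightPerp {Tr : Triangle T} (hTr : Tr ∈ distTriang T)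
    (h₃ : Tr.obj₃ ∈ rightPerp U) : XEpic U Tr.mor₁ := by
  intro U₀ hU₀ φ
  obtain ⟨ψ, hψ⟩ := Triangle.coyoneda_exact₂ Tr hTr φ (h₃ U₀ hU₀ _)
  exact ⟨ψ, hψ.symm⟩

lemma obj₂_mem_rightPerp_of_distTriang {Tr : Triangle T} (hTr : Tr ∈ distTriang T)
    (h₁ : Tr.obj₁ ∈ rightPerp U) (h₃ : Tr.obj₃ ∈ rightPerp U) : Tr.obj₂ ∈ rightPerp U := by
  intro U₀ hU₀ φ
  obtain ⟨ψ, rfl⟩ := xEpic_mor₁_of_obj₃_mem_rightPerp hTr h₃ U₀ hU₀ φ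
  rw [h₁ U₀ hU₀ ψ, zero_comp]

end RightPerp

theorem statement_2 (U : Set T) (htp : TorsionPair U (rightPerp U))
    (G : T) (hG : (G⟦(1 : ℤ)⟧) ∈ rightPerp U)
    (C₀ : T) (hC : C₀ ∈ U) (f : C₀ ⟶ G) :
    ∃ (Q : T) (_ : Q ∈ U) (_ : (Q⟦(1 : ℤ)⟧) ∈ rightPerp U)
      (g : C₀ ⟶ Q) (h : Q ⟶ G), f = g ≫ h := by
  obtain ⟨C, D, a, _, _, hTr, hCU, hD⟩ := htp.2 G
  obtain ⟨g, hg⟩ := xEpic_mor₁_of_obj₃_mem_rightPerp hTr hD C₀ hC f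
  have hC₁ : (C⟦(1 : ℤ)⟧) ∈ rightPerp U :=
    obj₂_mem_rightPerp_of_distTriang (rot_of_distTriang _ (rot_of_distTriang _ hTr)) hD hG
  exact ⟨C, hCU, hC₁, g, a, hg.symm⟩

end VerdierPaper
end

section
/- Let T be a triangulated category and V a subcategory such that (^⊥V, V) is a torsion pair in T. If G is an object of T with G[-1] ∈ ^⊥V, then every morphism f: G → C with C ∈ V factors through an object R with R ∈ V and R[-1] ∈ ^⊥V (that is, f factors through the subcategory V ∩ (^⊥V)[1]). -/
open CategoryTheory Category Limits Pretriangulated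

universe v u

variable {T : Type u} [Category.{v} T] [HasZeroObject T] [HasShift T ℤ]
  [Preadditive T] [∀ n : ℤ, (CategoryTheory.shiftFunctor T n).Additive] [Pretriangulated T]

namespace VerdierPaper

theorem obj₂_mem_leftPerp_of_distTriang (V : Set T) (Tr : Triangle T) (hTr : Tr ∈ distTriang T)
    (h₁ : Tr.obj₁ ∈ leftPerp V) (h₃ : Tr.obj₃ ∈ leftPerp V) : Tr.obj₂ ∈ leftPerp V := by
  intro V₀ hV₀ φ
  obtain ⟨ψ, rfl⟩ := Tr.yoneda_exact₂ hTr φ (h₁ V₀ hV₀ _)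
  rw [h₃ V₀ hV₀ ψ, comp_zero]

theorem statement_3 (V : Set T) (htp : TorsionPair (leftPerp V) V)
    (G : T) (hG : (G⟦(-1 : ℤ)⟧) ∈ leftPerp V)
    (C₀ : T) (hC : C₀ ∈ V) (f : G ⟶ C₀) :
    ∃ (R : T) (_ : R ∈ V) (_ : (R⟦(-1 : ℤ)⟧) ∈ leftPerp V)
      (g : G ⟶ R) (h : R ⟶ C₀), f = g ≫ h := by
  obtain ⟨E, R, e, p, d, hTr, hE, hR⟩ := htp.2 G
  obtain ⟨h, hfh⟩ := Triangle.yoneda_exact₂ _ hTr f (hE C₀ hC _)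
  -- rotating `E → G → R → E⟦1⟧` backwards twice gives `G⟦-1⟧ → R⟦-1⟧ → E → G`
  have hR' : R⟦(-1 : ℤ)⟧ ∈ leftPerp V :=
    obj₂_mem_leftPerp_of_distTriang V _
      (inv_rot_of_distTriang _ (inv_rot_of_distTriang _ hTr)) hG hE
  exact ⟨R, hR, hR', p, h, hfh⟩

end VerdierPaper
end

section
/- Let T be a triangulated category, N a triangulated subcategory of T, and U, V subcategories such that (U, U^⊥) and (^⊥V, V) are torsion pairs in T. Set X = U ∩ V ∩ N and assume that X is closed under direct summands, that U^⊥[-1] ⊆ V ∩ N, and that (^⊥V)[1] = U ∩ N. Then for every distinguished triangle A →(s) B → N → A[1] with A, B ∈ U ∩ V and N ∈ N, there exists a morphism t: B → A such that 1_A − t∘s and 1_B − s∘t both factor through X (that is, (U, X, V) satisfies the Verdier condition). -/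
/-!
Let `N₀` be the cone of `s` and `W → N₀ → R → W[1]` its `(U, U^⊥)`-triangle. The hypotheses put
`R[-1]` in `V ∩ N`, hence `R` and then `W` in `N`. Since `Hom(B, R) = 0` and `Hom(W, A[1]) = 0`,
the maps `B → N₀` and `W → N₀` factor through each other, which yields `t₁` with `1_B - t₁ s`
factoring through `W`, and dually `t₂` with `1_A - s t₂` factoring through `R[-1]`. Morphisms from
`U ∩ N` to `V` factor through `X` (through the `V`-part of the source, which stays in `U ∩ N`), and
so do morphisms from `U` to `V ∩ N`. Finally `t = t₁ + t₂ - t₂ s t₁` is an inverse of `s` modulo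
the ideal of morphisms factoring through `X`.
-/

open CategoryTheory Category Limits Pretriangulated

universe v u

variable {T : Type u} [Category.{v} T] [HasZeroObject T] [HasShift T ℤ]
  [Preadditive T] [∀ n : ℤ, (CategoryTheory.shiftFunctor T n).Additive] [Pretriangulated T]

namespace VerdierPaper

lemma FactorsThru.comp_left {X : Set T} {A B C : T} {f : A ⟶ B} (hf : FactorsThru X f)
    (e : C ⟶ A) : FactorsThru X (e ≫ f) := by
  obtain ⟨X₀, hX₀, p, q, rfl⟩ := hf
  exact ⟨X₀, hX₀, e ≫ p, q, by simp⟩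

lemma FactorsThru.comp_right {X : Set T} {A B C : T} {f : A ⟶ B} (hf : FactorsThru X f)
    (e : B ⟶ C) : FactorsThru X (f ≫ e) := by
  obtain ⟨X₀, hX₀, p, q, rfl⟩ := hf
  exact ⟨X₀, hX₀, p, q ≫ e, by simp⟩

lemma exists_inverse_modulo_of_left_right_inverse {X : Set T} {A B : T} (s : A ⟶ B)
    (t₁ t₂ : B ⟶ A) (h₁ : FactorsThru X (𝟙 B - t₁ ≫ s)) (h₂ : FactorsThru X (𝟙 A - s ≫ t₂)) :
    ∃ t : B ⟶ A, FactorsThru X (𝟙 A - s ≫ t) ∧ FactorsThru X (𝟙 B - t ≫ s) := by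
  refine ⟨t₁ + t₂ - t₂ ≫ s ≫ t₁, ?_, ?_⟩
  · have e : 𝟙 A - s ≫ (t₁ + t₂ - t₂ ≫ s ≫ t₁) = (𝟙 A - s ≫ t₂) ≫ (𝟙 A - s ≫ t₁) := by
      simp only [Preadditive.comp_sub, Preadditive.sub_comp, Preadditive.comp_add,
        Category.assoc, Category.comp_id, Category.id_comp]
      abel
    exact e ▸ h₂.comp_right _
  · have e : 𝟙 B - (t₁ + t₂ - t₂ ≫ s ≫ t₁) ≫ s = (𝟙 B - t₂ ≫ s) ≫ (𝟙 B - t₁ ≫ s) := by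
      simp only [Preadditive.comp_sub, Preadditive.sub_comp, Preadditive.add_comp,
        Category.assoc, Category.comp_id, Category.id_comp]
      abel
    exact e ▸ h₁.comp_left _

lemma mem_rightPerp_of_iso {U : Set T} {A B : T} (e : A ≅ B) (hA : A ∈ rightPerp U) :
    B ∈ rightPerp U := fun U₀ hU₀ f => by
  simpa using congrArg (· ≫ e.hom) (hA U₀ hU₀ (f ≫ e.inv))

lemma shift_neg_one_mem_leftPerp_iff {V : Set T} {K : T} :
    K⟦(-1 : ℤ)⟧ ∈ leftPerp V ↔ ∀ L ∈ V, ∀ f : K ⟶ L⟦(1 : ℤ)⟧, f = 0 := by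
  refine forall₂_congr fun L _ => ⟨fun h f => ?_, fun h φ => ?_⟩
  · have := h (f⟦(-1 : ℤ)⟧' ≫ (shiftFunctorCompIsoId T (1 : ℤ) (-1) (by norm_num)).hom.app L)
    rwa [Preadditive.IsIso.comp_right_eq_zero, Functor.map_eq_zero_iff] at this
  · have := h ((shiftFunctorCompIsoId T (-1 : ℤ) 1 (by norm_num)).inv.app K ≫ φ⟦(1 : ℤ)⟧')
    rwa [Preadditive.IsIso.comp_left_eq_zero, Functor.map_eq_zero_iff] at this

lemma exists_comp_eq_of_shift_map_eq_comp {A B R : T} {f : A ⟶ B} {k : A⟦(1 : ℤ)⟧ ⟶ R}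
    {p : R ⟶ B⟦(1 : ℤ)⟧} (h : f⟦(1 : ℤ)⟧' = k ≫ p) :
    ∃ (k' : A ⟶ R⟦(-1 : ℤ)⟧) (p' : R⟦(-1 : ℤ)⟧ ⟶ B), f = k' ≫ p' := by
  let η := shiftFunctorCompIsoId T (1 : ℤ) (-1) (by norm_num)
  refine ⟨η.inv.app A ≫ k⟦(-1 : ℤ)⟧', p⟦(-1 : ℤ)⟧' ≫ η.hom.app B, ?_⟩
  have := NatIso.naturality_1 η f
  simp only [Functor.comp_map, h, Functor.map_comp, Functor.id_map] at this
  simpa only [Category.assoc] using this.symm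

section Triangles

variable {A B C W R : T} {s : A ⟶ B} {g : B ⟶ C} {h : C ⟶ A⟦(1 : ℤ)⟧}
  {w : W ⟶ C} {r : C ⟶ R} {d : R ⟶ W⟦(1 : ℤ)⟧}

lemma exists_id_sub_comp_eq_comp_of_distTriang (hT : Triangle.mk s g h ∈ distTriang T)
    (hW : Triangle.mk w r d ∈ distTriang T) (hgr : g ≫ r = 0) (hwh : w ≫ h = 0) :
    ∃ (t : B ⟶ A) (g' : B ⟶ W) (w' : W ⟶ B), 𝟙 B - t ≫ s = g' ≫ w' := by
  obtain ⟨g', hg'⟩ : ∃ g' : B ⟶ W, g = g' ≫ w := Triangle.coyoneda_exact₂ _ hW g hgr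
  obtain ⟨w', hw'⟩ : ∃ w' : W ⟶ B, w = w' ≫ g := Triangle.coyoneda_exact₃ _ hT w hwh
  have hkill : (𝟙 B - g' ≫ w') ≫ g = 0 := by
    rw [Preadditive.sub_comp, Category.assoc, ← hw', ← hg', Category.id_comp, sub_self]
  obtain ⟨t, ht⟩ : ∃ t : B ⟶ A, 𝟙 B - g' ≫ w' = t ≫ s :=
    Triangle.coyoneda_exact₂ _ hT _ hkill
  exact ⟨t, g', w', by rw [← ht]; abel⟩

lemma exists_id_sub_comp_eq_comp_shift_of_distTriang (hT : Triangle.mk s g h ∈ distTriang T)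
    (hW : Triangle.mk w r d ∈ distTriang T) (hgr : g ≫ r = 0) (hwh : w ≫ h = 0) :
    ∃ (t : B ⟶ A) (k : A ⟶ R⟦(-1 : ℤ)⟧) (p : R⟦(-1 : ℤ)⟧ ⟶ A), 𝟙 A - s ≫ t = k ≫ p := by
  obtain ⟨p, hp⟩ : ∃ p : R ⟶ A⟦(1 : ℤ)⟧, h = r ≫ p := Triangle.yoneda_exact₂ _ hW h hwh
  obtain ⟨k, hk⟩ : ∃ k : A⟦(1 : ℤ)⟧ ⟶ R, r = h ≫ k := Triangle.yoneda_exact₃ _ hT r hgr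
  have hkill : h ≫ (𝟙 _ - k ≫ p) = 0 := by
    rw [Preadditive.comp_sub, ← Category.assoc, ← hk, ← hp, Category.comp_id, sub_self]
  obtain ⟨τ, hτ⟩ : ∃ τ : B⟦(1 : ℤ)⟧ ⟶ A⟦(1 : ℤ)⟧,
      𝟙 (A⟦(1 : ℤ)⟧) - k ≫ p = (-s⟦(1 : ℤ)⟧') ≫ τ :=
    Triangle.yoneda_exact₃ _ (rot_of_distTriang _ hT) _ hkill
  obtain ⟨t, rfl⟩ := (shiftFunctor T (1 : ℤ)).map_surjective τ
  refine ⟨-t, exists_comp_eq_of_shift_map_eq_comp (k := k) (p := p) ?_⟩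
  have : k ≫ p = 𝟙 _ - (𝟙 _ - k ≫ p) := by abel
  rw [this, hτ]
  simp

end Triangles

section TorsionPairs

variable {N U V : Set T}

lemma factorsThru_of_source_mem (htpV : TorsionPair (leftPerp V) V)
    (h2 : ∀ A : T, (A⟦(-1 : ℤ)⟧) ∈ leftPerp V ↔ A ∈ U ∩ N)
    {K L : T} (hK : K ∈ U ∩ N) (hL : L ∈ V) (f : K ⟶ L) : FactorsThru (U ∩ V ∩ N) f := by
  obtain ⟨Z, V₀, a, b, c, hT, hZ, hV₀⟩ := htpV.2 K
  obtain ⟨f', hf'⟩ := Triangle.yoneda_exact₂ _ hT f (hZ L hL (a ≫ f))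
  -- `Hom(V₀, V[1]) = 0` because both `Hom(K, V[1])` and `Hom(Z[1], V[1]) ≅ Hom(Z, V)` vanish.
  have hV₀UN : V₀ ∈ U ∩ N := by
    refine (h2 V₀).1 (shift_neg_one_mem_leftPerp_iff.2 fun L' hL' ψ => ?_)
    have hbψ : b ≫ ψ = 0 := shift_neg_one_mem_leftPerp_iff.1 ((h2 K).2 hK) L' hL' _
    obtain ⟨ψ', rfl⟩ : ∃ ψ' : Z⟦(1 : ℤ)⟧ ⟶ L'⟦(1 : ℤ)⟧, ψ = c ≫ ψ' :=
      Triangle.yoneda_exact₃ _ hT ψ hbψ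
    obtain ⟨ψ₀, rfl⟩ := (shiftFunctor T (1 : ℤ)).map_surjective ψ'
    rw [hZ L' hL' ψ₀, Functor.map_zero, comp_zero]
  exact ⟨V₀, ⟨⟨hV₀UN.1, hV₀⟩, hV₀UN.2⟩, b, f', hf'⟩

lemma exists_torsion_distTriang_of_mem (hN : IsTriangulatedSub N)
    (htpU : TorsionPair U (rightPerp U))
    (h1 : ∀ A : T, (A⟦(1 : ℤ)⟧) ∈ rightPerp U → A ∈ V ∩ N) {L : T} (hL : L ∈ N) :
    ∃ (W R : T) (w : W ⟶ L) (r : L ⟶ R) (d : R ⟶ W⟦(1 : ℤ)⟧),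
      Triangle.mk w r d ∈ distTriang T ∧ W ∈ U ∩ N ∧ R ∈ rightPerp U ∧ R⟦(-1 : ℤ)⟧ ∈ V ∩ N := by
  obtain ⟨W, R, w, r, d, hT, hW, hR⟩ := htpU.2 L
  let e := (shiftFunctorCompIsoId T (-1 : ℤ) 1 (by norm_num)).app R
  have hR' : R⟦(-1 : ℤ)⟧ ∈ V ∩ N := h1 _ (mem_rightPerp_of_iso e.symm hR)
  have hRN : R ∈ N := hN.closedIso e (hN.shift _ hR'.2)
  exact ⟨W, R, w, r, d, hT, ⟨hW, hN.two_of_three₂₃ _ hT hL hRN⟩, hR, hR'⟩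

lemma factorsThru_of_target_mem (hN : IsTriangulatedSub N)
    (htpU : TorsionPair U (rightPerp U)) (htpV : TorsionPair (leftPerp V) V)
    (h1 : ∀ A : T, (A⟦(1 : ℤ)⟧) ∈ rightPerp U → A ∈ V ∩ N)
    (h2 : ∀ A : T, (A⟦(-1 : ℤ)⟧) ∈ leftPerp V ↔ A ∈ U ∩ N)
    {K L : T} (hK : K ∈ U) (hL : L ∈ V ∩ N) (f : K ⟶ L) : FactorsThru (U ∩ V ∩ N) f := by
  obtain ⟨W, R, w, r, d, hT, hW, hR, -⟩ := exists_torsion_distTriang_of_mem hN htpU h1 hL.2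
  obtain ⟨f', rfl⟩ := Triangle.coyoneda_exact₂ _ hT f (hR K hK _)
  exact (factorsThru_of_source_mem htpV h2 hW hL.1 w).comp_left f'

end TorsionPairs

theorem statement_5_general (N U V X : Set T) (hN : IsTriangulatedSub N)
    (htpU : TorsionPair U (rightPerp U)) (htpV : TorsionPair (leftPerp V) V)
    (hX : X = U ∩ V ∩ N)
    (h1 : ∀ A : T, (A⟦(1 : ℤ)⟧) ∈ rightPerp U → A ∈ V ∩ N)
    (h2 : ∀ A : T, (A⟦(-1 : ℤ)⟧) ∈ leftPerp V ↔ A ∈ U ∩ N) :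
    VerdierCondition N U X V := by
  subst hX
  intro A B C s g h hT hA hB hC
  obtain ⟨W, R, w, r, d, hWR, hW, hR, hR'⟩ := exists_torsion_distTriang_of_mem hN htpU h1 hC
  have hgr : g ≫ r = 0 := hR B hB.1 _
  have hwh : w ≫ h = 0 := shift_neg_one_mem_leftPerp_iff.1 ((h2 W).2 hW) A hA.2 _
  obtain ⟨t₁, g', w', ht₁⟩ := exists_id_sub_comp_eq_comp_of_distTriang hT hWR hgr hwh
  obtain ⟨t₂, k, p, ht₂⟩ := exists_id_sub_comp_eq_comp_shift_of_distTriang hT hWR hgr hwh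
  refine exists_inverse_modulo_of_left_right_inverse s t₁ t₂ ?_ ?_
  · exact ht₁ ▸ (factorsThru_of_source_mem htpV h2 hW hB.2 w').comp_left g'
  · exact ht₂ ▸ (factorsThru_of_target_mem hN htpU htpV h1 h2 hA.1 hR' k).comp_right p

theorem statement_5 (N U V X : Set T) (hN : IsTriangulatedSub N)
    (htpU : TorsionPair U (rightPerp U)) (htpV : TorsionPair (leftPerp V) V)
    (hX : X = U ∩ V ∩ N) (hXsumm : ClosedUnderSummands X)
    (h1 : ∀ A : T, (A⟦(1 : ℤ)⟧) ∈ rightPerp U → A ∈ V ∩ N)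
    (h2 : ∀ A : T, (A⟦(-1 : ℤ)⟧) ∈ leftPerp V ↔ A ∈ U ∩ N) :
    VerdierCondition N U X V :=
  statement_5_general N U V X hN htpU htpV hX h1 h2

end VerdierPaper
end

section
/- Let T be a triangulated category, N a triangulated subcategory of T, and (U, X, V) an N-localization triple of T. Then for every object A of T there exist objects B ∈ V and D ∈ U ∩ V, morphisms j: A → B and r: D → B, and distinguished triangles A →(j) B → N₁ → A[1] and D →(r) B → N₂ → D[1] with N₁, N₂ ∈ N. In particular, every object of T becomes isomorphic in the Verdier quotient T/N to an object of U ∩ V. -/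
open CategoryTheory Category Limits Pretriangulated

universe v u

variable {T : Type u} [Category.{v} T] [HasZeroObject T] [HasShift T ℤ]
  [Preadditive T] [∀ n : ℤ, (CategoryTheory.shiftFunctor T n).Additive] [Pretriangulated T]

namespace VerdierPaper

/-- The class `S_N` of morphisms fitting in a distinguished triangle with cone in `N`;
the Verdier quotient `T/N` is the localization of `T` at `S_N`. -/
def SN (N : Set T) : MorphismProperty T := fun A B s =>
  ∃ (N₀ : T) (g : B ⟶ N₀) (h : N₀ ⟶ A⟦(1 : ℤ)⟧),
    Triangle.mk s g h ∈ (distTriang T) ∧ N₀ ∈ N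

theorem statement_9 {Q : Type*} [Category Q] (L : T ⥤ Q)
    (N U X V : Set T) [L.IsLocalization (SN N)]
    (hN : IsTriangulatedSub N) (hLoc : IsNLocalizationTriple N U X V) (A : T) :
    ∃ (B Dv : T) (_ : B ∈ V) (_ : Dv ∈ U ∩ V) (j : A ⟶ B) (r : Dv ⟶ B)
      (N₁ N₂ : T) (_ : N₁ ∈ N) (_ : N₂ ∈ N)
      (g₁ : B ⟶ N₁) (d₁ : N₁ ⟶ A⟦(1 : ℤ)⟧) (g₂ : B ⟶ N₂) (d₂ : N₂ ⟶ Dv⟦(1 : ℤ)⟧),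
      Triangle.mk j g₁ d₁ ∈ (distTriang T) ∧ Triangle.mk r g₂ d₂ ∈ (distTriang T) ∧
      Nonempty (L.obj A ≅ L.obj Dv) := by
  obtain ⟨R, W, j, t, d, hTr, ⟨hRV, _⟩, hW⟩ := hLoc.preenvelope A
  obtain ⟨W', Q, w, r, d', hTr', ⟨hQ, _⟩, hWp, hQUV, _, _⟩ := hLoc.precoverV R hRV
  have hWN : W ∈ N := hLoc.perpL_subset hW
  have hW'N : (W'⟦(1 : ℤ)⟧) ∈ N := hN.shift W' (hLoc.perpR_subset hWp)
  have hTr'' := rot_of_distTriang _ hTr'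
  have hj : SN N j := ⟨W, t, d, hTr, hWN⟩
  have hr : SN N r := ⟨W'⟦(1 : ℤ)⟧, d', -(w⟦(1 : ℤ)⟧'), hTr'', hW'N⟩
  have ij : IsIso (L.map j) := Localization.inverts L (SN N) j hj
  have ir : IsIso (L.map r) := Localization.inverts L (SN N) r hr
  exact ⟨R, Q, hRV, hQUV, j, r, W, W'⟦(1 : ℤ)⟧, hWN, hW'N, t, d, d', -(w⟦(1 : ℤ)⟧'),
    hTr, hTr'', ⟨asIso (L.map j) ≪≫ (asIso (L.map r)).symm⟩⟩

end VerdierPaper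
end

section
/- Let (U, X, V) be a localization triple of a triangulated category T and let W be an object of U. Then every morphism from W to an object of V factors through X if and only if every morphism from W to an object of U ∩ V factors through X. -/
open CategoryTheory Category Limits Pretriangulated

universe v u

variable {T : Type u} [Category.{v} T] [HasZeroObject T] [HasShift T ℤ]
  [Preadditive T] [∀ n : ℤ, (CategoryTheory.shiftFunctor T n).Additive] [Pretriangulated T]

namespace VerdierPaper

theorem statement_12 (U X V : Set T) (hLoc : IsLocalizationTriple U X V)
    (W : T) (hW : W ∈ U) :
    (∀ V₀ ∈ V, ∀ f : W ⟶ V₀, FactorsThru X f) ↔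
      (∀ Z₀ ∈ U ∩ V, ∀ f : W ⟶ Z₀, FactorsThru X f) := by
  constructor
  · intro h Z₀ hZ f
    exact h Z₀ hZ.2 f
  · intro h V₀ hV f
    obtain ⟨W', Q, w, r, d, _, ⟨_, hEpic⟩, _, hQ, _, _⟩ := hLoc.precoverV V₀ hV
    obtain ⟨g, hg⟩ := hEpic W hW f
    obtain ⟨X₀, hX₀, a, b, hab⟩ := h Q hQ g
    exact ⟨X₀, hX₀, a, b ≫ r, by rw [← hg, hab, Category.assoc]⟩

end VerdierPaper
end
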